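/- arXiv:1306.3170 — 3 statements merged into one kernel-verified Lean document; each statement's English description precedes it below -/
import Mathlib

section
/- The Farey graph F contains no 4-clique: there do not exist four pairwise distinct vertices of F that are pairwise adjacent. (Equivalently, there is no set of four vertices of F any two of which are at graph distance 1.) -/
/-!
Send a vertex `p/q` (in lowest terms, `∞ = 1/0`) to the vector `(p, q)` reduced mod 2. Farey
neighbours have determinant `±1`, hence determinant `1` mod 2, so the vectors of two distinct
vertices of a clique are distinct and nonzero. A 4-clique would give four distinct nonzero
vectors in `(ZMod 2)²`, which has only three.
-/

/-- The Farey graph on vertex set `Option ℚ`, where `none` represents `∞ = 1/0`.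
Two distinct rationals `a`, `b` are adjacent iff `|a.num * b.den - b.num * a.den| = 1`;
`∞` is adjacent to a rational `a` iff `a.den = 1`. -/
def Farey : SimpleGraph (Option ℚ) where
  Adj u v :=
    match u, v with
    | none, none => False
    | none, some a => a.den = 1
    | some a, none => a.den = 1
    | some a, some b => a ≠ b ∧ |a.num * (b.den : ℤ) - b.num * (a.den : ℤ)| = 1
  symm := by
    constructor
    intro u v h
    match u, v with
    | none, some a => exact h
    | some a, none => exact h
    | some a, some b =>
      refine ⟨h.1.symm, ?_⟩
      rw [abs_sub_comm]
      exact h.2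
  loopless := by
    constructor
    intro u h
    match u with
    | none => exact h
    | some a => exact h.1 rfl

def det2 {R : Type*} [CommRing R] (x y : R × R) : R := x.1 * y.2 - y.1 * x.2

section det2

variable {R : Type*} [CommRing R] [Nontrivial R] {x y : R × R}

theorem ne_of_det2_eq_one (h : det2 x y = 1) : x ≠ y := by
  rintro rfl
  simp [det2] at h

theorem left_ne_zero_of_det2_eq_one (h : det2 x y = 1) : x ≠ 0 := by
  rintro rfl
  simp [det2] at h

end det2

def fareyPrimVec : Option ℚ → ℤ × ℤ
  | none => (1, 0)
  | some a => (a.num, a.den)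

theorem abs_det2_fareyPrimVec_of_adj {u v : Option ℚ} (h : Farey.Adj u v) :
    |det2 (fareyPrimVec u) (fareyPrimVec v)| = 1 := by
  match u, v, h with
  | none, some a, (h : a.den = 1) => simp [det2, fareyPrimVec, h]
  | some a, none, (h : a.den = 1) => simp [det2, fareyPrimVec, h]
  | some _, some _, h => exact h.2

theorem intCast_zmod_two_eq_one_of_abs_eq_one {z : ℤ} (h : |z| = 1) : (z : ZMod 2) = 1 := by
  rcases abs_eq zero_le_one |>.mp h with rfl | rfl <;> decide

def fareyVecModTwo (u : Option ℚ) : ZMod 2 × ZMod 2 :=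
  Prod.map Int.cast Int.cast (fareyPrimVec u)

theorem det2_fareyVecModTwo_of_adj {u v : Option ℚ} (h : Farey.Adj u v) :
    det2 (fareyVecModTwo u) (fareyVecModTwo v) = 1 := by
  have h₂ := intCast_zmod_two_eq_one_of_abs_eq_one (abs_det2_fareyPrimVec_of_adj h)
  simpa [det2, fareyVecModTwo] using h₂

theorem farey_cliqueFree_four : Farey.CliqueFree 4 := by
  intro s hs
  have hdet {u v : Option ℚ} (hu : u ∈ s) (hv : v ∈ s) (huv : u ≠ v) :
      det2 (fareyVecModTwo u) (fareyVecModTwo v) = 1 :=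
    det2_fareyVecModTwo_of_adj (hs.1 hu hv huv)
  have hmaps : Set.MapsTo fareyVecModTwo s ({0}ᶜ : Finset (ZMod 2 × ZMod 2)) := by
    intro u hu
    obtain ⟨v, hv, hvu⟩ := s.exists_mem_ne (by rw [hs.2]; norm_num) u
    simpa using left_ne_zero_of_det2_eq_one (hdet hu hv hvu.symm)
  have hinj : Set.InjOn fareyVecModTwo s := by
    intro u hu v hv huv
    by_contra hne
    exact ne_of_det2_eq_one (hdet hu hv hne) huv
  have hcard := Finset.card_le_card_of_injOn _ hmaps hinj
  rw [hs.2] at hcard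
  exact absurd hcard (by decide)

/-- The Farey graph contains no 4-clique: there do not exist four pairwise distinct
vertices that are pairwise adjacent. -/
theorem farey_no_four_clique :
    ¬ ∃ v₁ v₂ v₃ v₄ : Option ℚ,
      v₁ ≠ v₂ ∧ v₁ ≠ v₃ ∧ v₁ ≠ v₄ ∧ v₂ ≠ v₃ ∧ v₂ ≠ v₄ ∧ v₃ ≠ v₄ ∧
      Farey.Adj v₁ v₂ ∧ Farey.Adj v₁ v₃ ∧ Farey.Adj v₁ v₄ ∧
      Farey.Adj v₂ v₃ ∧ Farey.Adj v₂ v₄ ∧ Farey.Adj v₃ v₄ := by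
  rintro ⟨v₁, v₂, v₃, v₄, -, -, -, -, -, -, h₁₂, h₁₃, h₁₄, h₂₃, h₂₄, h₃₄⟩
  have hclique : Farey.IsNClique 4 {v₁, v₂, v₃, v₄} :=
    (SimpleGraph.is3Clique_triple_iff.2 ⟨h₂₃, h₂₄, h₃₄⟩).insert (by simp [h₁₂, h₁₃, h₁₄])
  exact farey_cliqueFree_four _ hclique
end

section
/- In the Farey graph F, every edge lies in exactly two triangles: for any two adjacent vertices u and v of F, there are exactly two vertices w of F adjacent to both u and v. -/
/-!
A vertex `p/q` of the Farey graph is the primitive vector `±(p, q)` of `ℤ²` up to sign (with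
`∞ = ±(1, 0)`), and two vertices are adjacent exactly when their vectors `A`, `B` satisfy
`det (A, B) = ±1`. If `W` is a common neighbour, Cramer's rule
`det (A, B) • W = det (W, B) • A + det (A, W) • B` has all three determinants equal to `±1`, so
`W = ±(A + B)` or `W = ±(A - B)`. Conversely both mediants `A ± B` are primitive and adjacent to
`A` and `B`, and they are distinct vertices since `A` and `B` are independent.
-/

namespace Farey

section Det

variable {R : Type*} [CommRing R]

def det (A B : R × R) : R := A.1 * B.2 - B.1 * A.2

@[simp] lemma det_self (A : R × R) : det A A = 0 := by
  simp only [det]; ring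

lemma det_comm (A B : R × R) : det B A = -det A B := by
  simp only [det]; ring

@[simp] lemma det_add_right (A B C : R × R) : det A (B + C) = det A B + det A C := by
  simp only [det, Prod.fst_add, Prod.snd_add]; ring

@[simp] lemma det_sub_right (A B C : R × R) : det A (B - C) = det A B - det A C := by
  simp only [det, Prod.fst_sub, Prod.snd_sub]; ring

@[simp] lemma det_neg_right (A B : R × R) : det A (-B) = -det A B := by
  simp only [det, Prod.fst_neg, Prod.snd_neg]; ring

lemma det_smul_eq_add (A B W : R × R) : det A B • W = det W B • A + det A W • B := by
  ext <;>
    simp only [det, Prod.smul_fst, Prod.smul_snd, Prod.fst_add, Prod.snd_add, smul_eq_mul] <;> ring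

lemma isCoprime_of_isUnit_det {A C : R × R} (h : IsUnit (det A C)) : IsCoprime C.1 C.2 := by
  obtain ⟨u, hu⟩ := h
  refine ⟨-(↑u⁻¹ * A.2), ↑u⁻¹ * A.1, ?_⟩
  have : (↑u⁻¹ : R) * det A C = 1 := by rw [← hu, Units.inv_mul]
  rw [← this, det]; ring

end Det

lemma eq_add_or_sub_of_abs_det_eq_one {A B W : ℤ × ℤ} (hAB : |det A B| = 1)
    (hAW : |det A W| = 1) (hWB : |det W B| = 1) :
    (W = A + B ∨ W = -(A + B)) ∨ (W = A - B ∨ W = -(A - B)) := by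
  have cramer := det_smul_eq_add A B W
  simp only [Prod.ext_iff, Prod.smul_fst, Prod.smul_snd, Prod.fst_add, Prod.snd_add,
    Prod.fst_sub, Prod.snd_sub, Prod.fst_neg, Prod.snd_neg, smul_eq_mul] at cramer ⊢
  rcases abs_eq zero_le_one |>.mp hAB with e | e <;>
  rcases abs_eq zero_le_one |>.mp hAW with f | f <;>
  rcases abs_eq zero_le_one |>.mp hWB with g | g <;>
  rw [e, f, g] at cramer <;> omega

lemma add_ne_sub_and_neg {A B : ℤ × ℤ} (h : det A B ≠ 0) :
    A + B ≠ A - B ∧ A + B ≠ -(A - B) := by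
  simp only [ne_eq, Prod.ext_iff, Prod.fst_add, Prod.snd_add, Prod.fst_sub, Prod.snd_sub,
    Prod.fst_neg, Prod.snd_neg]
  refine ⟨fun hB => h ?_, fun hA => h ?_⟩
  · obtain ⟨h₁, h₂⟩ : B.1 = 0 ∧ B.2 = 0 := by omega
    simp [det, h₁, h₂]
  · obtain ⟨h₁, h₂⟩ : A.1 = 0 ∧ A.2 = 0 := by omega
    simp [det, h₁, h₂]

def vec : Option ℚ → ℤ × ℤ
  | none => (1, 0)
  | some a => (a.num, a.den)

lemma vec_injective : Function.Injective vec := by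
  rintro (_ | a) (_ | b) h <;> simp only [vec, Prod.mk.injEq] at h
  · rfl
  · exact absurd h.2.symm (by exact_mod_cast b.den_ne_zero)
  · exact absurd h.2 (by exact_mod_cast a.den_ne_zero)
  · exact congrArg some (Rat.ext h.1 (by exact_mod_cast h.2))

lemma vec_ne_neg_vec (w w' : Option ℚ) : vec w ≠ -vec w' := by
  rcases w with _ | a <;> rcases w' with _ | b <;>
    simp only [vec, ne_eq, Prod.ext_iff, Prod.fst_neg, Prod.snd_neg] <;>
    grind [Rat.den_pos]

def Represents (w : Option ℚ) (V : ℤ × ℤ) : Prop := vec w = V ∨ vec w = -V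

lemma Represents.unique {w w' : Option ℚ} {V : ℤ × ℤ} (h : Represents w V)
    (h' : Represents w' V) : w = w' := by
  rcases h with rfl | h <;> rcases h' with h' | h'
  · exact vec_injective h'.symm
  · exact absurd (by rw [h', neg_neg]) (vec_ne_neg_vec w w')
  · exact absurd (by rw [h, h', neg_neg]) (vec_ne_neg_vec w' w)
  · exact vec_injective (h.trans h'.symm)

lemma Represents.ne_of_add_sub {w₁ w₂ : Option ℚ} {A B : ℤ × ℤ} (hAB : det A B ≠ 0)
    (h₁ : Represents w₁ (A + B)) (h₂ : Represents w₂ (A - B)) : w₁ ≠ w₂ := by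
  rintro rfl
  have := add_ne_sub_and_neg hAB
  unfold Represents at h₁ h₂
  grind

lemma exists_vec_some_eq {p q : ℤ} (hq : 0 < q) (h : IsCoprime p q) :
    ∃ a : ℚ, vec (some a) = (p, q) := by
  have hpq : p.natAbs.Coprime q.natAbs := Int.isCoprime_iff_gcd_eq_one.mp h
  exact ⟨p / q, Prod.ext (Rat.num_div_eq_of_coprime hq hpq) (Rat.den_div_eq_of_coprime hq hpq)⟩

lemma exists_represents {V : ℤ × ℤ} (h : IsCoprime V.1 V.2) : ∃ w, Represents w V := by
  obtain ⟨p, q⟩ := V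
  rcases lt_trichotomy q 0 with hq | rfl | hq
  · obtain ⟨a, ha⟩ := exists_vec_some_eq (neg_pos.mpr hq) h.neg_neg
    exact ⟨some a, Or.inr ha⟩
  · rcases Int.isUnit_iff.mp (isCoprime_zero_right.mp h) with rfl | rfl
    exacts [⟨none, Or.inl rfl⟩, ⟨none, Or.inr rfl⟩]
  · obtain ⟨a, ha⟩ := exists_vec_some_eq hq h
    exact ⟨some a, Or.inl ha⟩

lemma adj_iff_abs_det_eq_one {u v : Option ℚ} : Farey.Adj u v ↔ |det (vec u) (vec v)| = 1 := by
  rcases u with _ | a <;> rcases v with _ | b <;> simp [Farey, vec, det]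
  rintro h rfl
  simp at h

lemma abs_det_of_represents {w : Option ℚ} {V : ℤ × ℤ} (h : Represents w V) (A : ℤ × ℤ) :
    |det A (vec w)| = |det A V| := by
  rcases h with h | h <;> simp [h]

lemma adj_and_adj_iff_represents_add_or_sub {u v w : Option ℚ} (huv : Farey.Adj u v) :
    Farey.Adj u w ∧ Farey.Adj v w ↔
      Represents w (vec u + vec v) ∨ Represents w (vec u - vec v) := by
  simp only [adj_iff_abs_det_eq_one] at huv ⊢
  constructor
  · rintro ⟨hu, hv⟩
    exact eq_add_or_sub_of_abs_det_eq_one huv hu (by rwa [det_comm, abs_neg])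
  · rintro (h | h) <;> simp [abs_det_of_represents h, det_comm (vec u) (vec v), huv]

end Farey

/-- In the Farey graph, every edge lies in exactly two triangles: any two adjacent
vertices have exactly two common neighbors. -/
theorem farey_edge_in_exactly_two_triangles (u v : Option ℚ) (huv : Farey.Adj u v) :
    {w : Option ℚ | Farey.Adj u w ∧ Farey.Adj v w}.ncard = 2 := by
  open Farey in
  have hAB : |det (vec u) (vec v)| = 1 := adj_iff_abs_det_eq_one.mp huv
  have exists_rep (C : ℤ × ℤ) (hC : |det (vec u) C| = 1) : ∃ w, Represents w C :=
    exists_represents (isCoprime_of_isUnit_det (Int.isUnit_iff_abs_eq.mpr hC))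
  obtain ⟨w₁, h₁⟩ := exists_rep (vec u + vec v) (by simpa using hAB)
  obtain ⟨w₂, h₂⟩ := exists_rep (vec u - vec v) (by simpa using hAB)
  have hne : w₁ ≠ w₂ := Represents.ne_of_add_sub (abs_pos.mp (hAB ▸ one_pos)) h₁ h₂
  refine Set.ncard_eq_two.mpr ⟨w₁, w₂, hne, Set.ext fun w => ?_⟩
  simp only [Set.mem_ofPred_eq, Set.mem_insert_iff, Set.mem_singleton_iff,
    adj_and_adj_iff_represents_add_or_sub huv]
  refine ⟨fun h => h.imp (·.unique h₁) (·.unique h₂), ?_⟩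
  rintro (rfl | rfl)
  exacts [Or.inl h₁, Or.inr h₂]
end

section
/- For every natural number n ≥ 1, there is an isometric embedding of ℤⁿ with the ℓ¹ metric into the n-fold box product of the Farey graph: there exists a map f : (Fin n → ℤ) → (Fin n → Option ℚ) such that for all x, y : Fin n → ℤ, the graph distance in Fⁿ between f x and f y equals ∑ i, |x i − y i|. -/
/-- The n-fold box product of the Farey graph: vertices are functions
`Fin n → Option ℚ`, and `x`, `y` are adjacent iff they are adjacent in one
coordinate (in the Farey graph) and agree in all other coordinates. -/
def FareyPow (n : ℕ) : SimpleGraph (Fin n → Option ℚ) where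
  Adj x y := ∃ i : Fin n, Farey.Adj (x i) (y i) ∧ ∀ j : Fin n, j ≠ i → x j = y j
  symm := by
    constructor
    rintro x y ⟨i, hadj, heq⟩
    exact ⟨i, hadj.symm, fun j hj => (heq j hj).symm⟩
  loopless := by
    constructor
    rintro x ⟨i, hadj, -⟩
    exact Farey.loopless.irrefl _ hadj

/-!
The convergents `2, 5/2, 12/5, …` of the silver ratio `1 + √2 = [2; 2, 2, …]`, continued through
`∞` into their negatives, form a bi-infinite path `γ` in the Farey graph. A rational strictly
between two Farey neighbours `a, b` has denominator at least `a.den + b.den`; hence Farey edges do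
not cross, and because every partial quotient is `2`, the edges `γ k γ (k + 1)` cut off strictly
nested intervals, which a Farey edge can only leave through an endpoint. Counting the intervals
containing a rational yields a `1`-Lipschitz function `ψ` with `ψ ∘ γ = id`, so `γ` is an isometric
embedding of `ℤ`. Distances in a box power are sums of coordinate distances, so `γ` applied
coordinatewise embeds `ℤⁿ` with the `ℓ¹` metric.
-/

open Set

lemma Antitone.mem_iff_lt_sInf {α : Type*} {S : ℕ → Set α} (hS : Antitone S) {a : α}
    (h : ∃ k, a ∉ S k) (k : ℕ) : a ∈ S k ↔ k < sInf {k | a ∉ S k} :=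
  ⟨fun ha => lt_of_not_ge fun hle => Nat.sInf_mem h (hS hle ha),
    fun hk => not_not.mp (Nat.notMem_of_lt_sInf hk)⟩

namespace SimpleGraph

variable {V V' ι : Type*} {G : SimpleGraph V}

lemma Hom.edist_le {G' : SimpleGraph V'} (φ : G →g G') (u v : V) :
    G'.edist (φ u) (φ v) ≤ G.edist u v := by
  by_cases h : G.Reachable u v
  · obtain ⟨w, hw⟩ := h.exists_walk_length_eq_edist
    rw [← hw, ← w.length_map φ]
    exact SimpleGraph.edist_le _
  · rw [edist_eq_top_of_not_reachable h]
    exact le_top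

lemma Walk.abs_sub_le_length {ψ : V → ℤ} (hψ : ∀ u v, G.Adj u v → |ψ u - ψ v| ≤ 1)
    {u v : V} (w : G.Walk u v) : |ψ u - ψ v| ≤ w.length := by
  induction w with
  | nil => simp
  | @cons a b c hab w ih =>
    rw [length_cons, Nat.cast_succ]
    calc |ψ a - ψ c| ≤ |ψ a - ψ b| + |ψ b - ψ c| := abs_sub_le _ _ _
      _ ≤ 1 + w.length := add_le_add (hψ a b hab) ih
      _ = w.length + 1 := add_comm _ _

lemma natAbs_sub_le_edist {ψ : V → ℤ} (hψ : ∀ u v, G.Adj u v → |ψ u - ψ v| ≤ 1)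
    (u v : V) : ((ψ u - ψ v).natAbs : ℕ∞) ≤ G.edist u v := by
  by_cases h : G.Reachable u v
  · obtain ⟨w, hw⟩ := h.exists_walk_length_eq_edist
    rw [← hw, Nat.cast_le, ← Int.ofNat_le, Int.natCast_natAbs]
    exact w.abs_sub_le_length hψ
  · rw [edist_eq_top_of_not_reachable h]
    exact le_top

lemma edist_add_natCast_le {γ : ℤ → V} (hγ : ∀ m, G.Adj (γ m) (γ (m + 1))) (m : ℤ) (k : ℕ) :
    G.edist (γ m) (γ (m + k)) ≤ k := by
  induction k with
  | zero => simp
  | succ k ih =>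
    calc G.edist (γ m) (γ (m + ↑(k + 1)))
        ≤ G.edist (γ m) (γ (m + k)) + G.edist (γ (m + k)) (γ (m + k + 1)) := by
          rw [Nat.cast_succ, ← add_assoc]; exact G.edist_triangle
      _ ≤ k + 1 := by rw [edist_eq_one_iff_adj.mpr (hγ _)]; gcongr
      _ = ↑(k + 1) := by push_cast; rfl

lemma edist_eq_natAbs_of_leftInverse {γ : ℤ → V} (hγ : ∀ m, G.Adj (γ m) (γ (m + 1)))
    {ψ : V → ℤ} (hψ : ∀ u v, G.Adj u v → |ψ u - ψ v| ≤ 1) (hψγ : ∀ m, ψ (γ m) = m)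
    (a b : ℤ) : G.edist (γ a) (γ b) = (a - b).natAbs := by
  refine le_antisymm ?_ (by simpa only [hψγ] using natAbs_sub_le_edist hψ (γ a) (γ b))
  wlog hab : a ≤ b generalizing a b
  · rw [edist_comm, ← Int.natAbs_neg, neg_sub]
    exact this b a (le_of_not_ge hab)
  obtain ⟨k, rfl⟩ : ∃ k : ℕ, b = a + k := ⟨(b - a).toNat, by omega⟩
  simpa using edist_add_natCast_le hγ a k

def boxPi (G : SimpleGraph V) (ι : Type*) : SimpleGraph (ι → V) where
  Adj x y := ∃ i, G.Adj (x i) (y i) ∧ ∀ j, j ≠ i → x j = y j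
  symm := ⟨fun _ _ ⟨i, hadj, heq⟩ => ⟨i, hadj.symm, fun j hj => (heq j hj).symm⟩⟩
  loopless := ⟨fun _ ⟨_, hadj, _⟩ => G.loopless.irrefl _ hadj⟩

lemma boxPi_adj {x y : ι → V} :
    (G.boxPi ι).Adj x y ↔ ∃ i, G.Adj (x i) (y i) ∧ ∀ j, j ≠ i → x j = y j :=
  Iff.rfl

def boxPiUpdateHom [DecidableEq ι] (x : ι → V) (i : ι) : G →g G.boxPi ι where
  toFun := Function.update x i
  map_rel' h := boxPi_adj.mpr ⟨i, by simpa using h, fun j hj => by simp [Function.update_of_ne hj]⟩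

lemma edist_boxPi_le_sum [DecidableEq ι] (s : Finset ι) {x y : ι → V}
    (hxy : ∀ i ∉ s, x i = y i) : (G.boxPi ι).edist x y ≤ ∑ i ∈ s, G.edist (x i) (y i) := by
  induction s using Finset.induction_on generalizing x with
  | empty => simp [funext fun i => hxy i (Finset.notMem_empty i)]
  | @insert i s hi ih =>
    set z := Function.update x i (y i)
    have hzx : ∀ j ∈ s, z j = x j := fun j hj =>
      Function.update_of_ne (ne_of_mem_of_not_mem hj hi) _ _
    have hzy : ∀ j ∉ s, z j = y j := by
      intro j hj
      by_cases hji : j = i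
      · subst hji; exact Function.update_self ..
      · rw [show z j = x j from Function.update_of_ne hji _ _]; exact hxy j (by simp [hji, hj])
    calc (G.boxPi ι).edist x y ≤ (G.boxPi ι).edist x z + (G.boxPi ι).edist z y :=
          SimpleGraph.edist_triangle
      _ ≤ G.edist (x i) (y i) + ∑ j ∈ s, G.edist (z j) (y j) := by
          gcongr
          · simpa [boxPiUpdateHom, z] using (boxPiUpdateHom (G := G) x i).edist_le (x i) (y i)
          · exact ih hzy
      _ = ∑ j ∈ insert i s, G.edist (x j) (y j) := by
          rw [Finset.sum_insert hi, Finset.sum_congr rfl fun j hj => by rw [hzx j hj]]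

lemma sum_edist_le_length [Fintype ι] {x y : ι → V} (w : (G.boxPi ι).Walk x y) :
    ∑ i, G.edist (x i) (y i) ≤ w.length := by
  induction w with
  | nil => simp
  | @cons a b c hab w ih =>
    obtain ⟨i, hi, heq⟩ := boxPi_adj.mp hab
    have step : ∑ j, G.edist (a j) (b j) = 1 := by
      rw [Finset.sum_eq_single i (fun j _ hj => by rw [heq j hj, edist_self]) (by simp),
        edist_eq_one_iff_adj.mpr hi]
    calc ∑ j, G.edist (a j) (c j) ≤ ∑ j, (G.edist (a j) (b j) + G.edist (b j) (c j)) :=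
          Finset.sum_le_sum fun j _ => SimpleGraph.edist_triangle
      _ ≤ 1 + w.length := by rw [Finset.sum_add_distrib, step]; gcongr
      _ = (w.cons hab).length := by rw [Walk.length_cons]; push_cast; ring

theorem edist_boxPi [Fintype ι] (x y : ι → V) :
    (G.boxPi ι).edist x y = ∑ i, G.edist (x i) (y i) := by
  classical
  refine le_antisymm (edist_boxPi_le_sum Finset.univ fun i hi => absurd (Finset.mem_univ i) hi) ?_
  by_cases h : (G.boxPi ι).edist x y = ⊤
  · exact h ▸ le_top
  · obtain ⟨w, hw⟩ := exists_walk_of_edist_ne_top h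
    exact hw ▸ sum_edist_le_length w

end SimpleGraph

namespace Farey

lemma adj_some_iff {a b : ℚ} :
    Farey.Adj (some a) (some b) ↔ |a.num * (b.den : ℤ) - b.num * (a.den : ℤ)| = 1 := by
  refine ⟨And.right, fun h => ⟨?_, h⟩⟩
  rintro rfl
  simp at h

lemma adj_none_some_iff {a : ℚ} : Farey.Adj none (some a) ↔ a.den = 1 := Iff.rfl

lemma adj_neg {a b : ℚ} (h : Farey.Adj (some a) (some b)) : Farey.Adj (some (-a)) (some (-b)) := by
  rw [adj_some_iff] at h ⊢
  rw [← h, ← abs_neg]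
  simp only [Rat.num_neg_eq_neg_num, Rat.den_neg_eq_den]
  ring_nf

lemma den_add_den_le {a b x : ℚ} (h : Farey.Adj (some a) (some b)) (hax : a < x) (hxb : x < b) :
    a.den + b.den ≤ x.den := by
  have hlt := (Rat.lt_iff a b).mp (hax.trans hxb)
  have hdet : b.num * (a.den : ℤ) - a.num * b.den = 1 := by
    have := adj_some_iff.mp h
    rw [abs_sub_comm, abs_of_pos (by linarith)] at this
    exact this
  rw [Rat.lt_iff] at hax hxb
  have key : (b.den : ℤ) * (x.num * a.den - a.num * x.den)
      + a.den * (b.num * x.den - x.num * b.den) = x.den := by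
    linear_combination (x.den : ℤ) * hdet
  zify
  nlinarith

lemma not_adj_of_lt_of_lt {u v x : ℚ} (hx : x.den = 1) (hu : u < x) (hv : x < v) :
    ¬ Farey.Adj (some u) (some v) := fun h => by
  have := den_add_den_le h hu hv
  have := u.den_pos
  have := v.den_pos
  omega

lemma den_add_den_le_of_mem_uIoo {a b x : ℚ} (h : Farey.Adj (some a) (some b))
    (hx : x ∈ uIoo a b) : a.den + b.den ≤ x.den := by
  rcases le_total a b with hab | hab
  · rw [uIoo_of_le hab] at hx
    exact den_add_den_le h hx.1 hx.2
  · rw [uIoo_of_ge hab] at hx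
    exact add_comm a.den _ ▸ den_add_den_le h.symm hx.1 hx.2

/-- Farey edges do not cross. -/
lemma mem_uIoo_or_eq_of_adj_of_mem_uIoo {a b u v : ℚ} (hab : Farey.Adj (some a) (some b))
    (huv : Farey.Adj (some u) (some v)) (hv : v ∈ uIoo a b) : u ∈ uIoo a b ∨ u = a ∨ u = b := by
  wlog hle : a ≤ b generalizing a b
  · rw [uIoo_comm] at hv ⊢
    have := this hab.symm hv (le_of_not_ge hle)
    tauto
  rw [uIoo_of_le hle] at hv ⊢
  have hv' := den_add_den_le hab hv.1 hv.2
  by_contra! hu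
  obtain ⟨hIoo, hua, hub⟩ := hu
  rw [mem_Ioo, not_and_or, not_lt, not_lt] at hIoo
  rcases hIoo with hua' | hbu
  · have := den_add_den_le huv (lt_of_le_of_ne hua' hua) hv.1
    have := b.den_pos
    omega
  · have := den_add_den_le huv.symm hv.2 (lt_of_le_of_ne hbu (Ne.symm hub))
    have := a.den_pos
    omega

end Farey

def pell : ℕ → ℕ
  | 0 => 0
  | 1 => 1
  | k + 2 => 2 * pell (k + 1) + pell k

lemma pell_add_two (k : ℕ) : pell (k + 2) = 2 * pell (k + 1) + pell k := rfl

lemma pell_cassini (k : ℕ) :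
    (pell (k + 2) * pell k : ℤ) - pell (k + 1) ^ 2 = (-1) ^ (k + 1) := by
  induction k with
  | zero => simp [pell]
  | succ k ih =>
    rw [pow_succ (-1 : ℤ) (k + 1), ← ih]
    push_cast [pell_add_two]
    ring

lemma pell_coprime_succ (k : ℕ) : Nat.Coprime (pell (k + 1)) (pell k) := by
  induction k with
  | zero => simp [pell]
  | succ k ih =>
    rw [pell_add_two, Nat.coprime_mul_right_add_left]
    exact Nat.coprime_comm.mp ih

lemma pell_succ_pos (k : ℕ) : 0 < pell (k + 1) := by
  induction k with
  | zero => simp [pell]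
  | succ k ih => rw [pell_add_two]; omega

lemma pell_succ_strictMono : StrictMono fun k => pell (k + 1) :=
  strictMono_nat_of_lt_succ fun k => by
    simp only [pell_add_two]
    have := pell_succ_pos k
    omega

/-- The convergents `2, 5/2, 12/5, …` of the continued fraction `[2; 2, 2, …]` of the silver
ratio `1 + √2`. -/
def silverConv (k : ℕ) : ℚ := pell (k + 2) / pell (k + 1)

lemma silverConv_eq_intCast_div (k : ℕ) :
    silverConv k = ((pell (k + 2) : ℤ) : ℚ) / ((pell (k + 1) : ℤ) : ℚ) := by
  simp [silverConv]

@[simp] lemma silverConv_num (k : ℕ) : (silverConv k).num = pell (k + 2) := by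
  rw [silverConv_eq_intCast_div]
  exact Rat.num_div_eq_of_coprime (by exact_mod_cast pell_succ_pos k) (pell_coprime_succ _)

@[simp] lemma silverConv_den (k : ℕ) : (silverConv k).den = pell (k + 1) := by
  have := Rat.den_div_eq_of_coprime (a := pell (k + 2)) (b := pell (k + 1))
    (by exact_mod_cast pell_succ_pos k) (pell_coprime_succ _)
  rw [← silverConv_eq_intCast_div] at this
  exact_mod_cast this

lemma silverConv_zero : silverConv 0 = 2 := by norm_num [silverConv, pell]

lemma silverConv_injective : Function.Injective silverConv := fun i j h =>
  pell_succ_strictMono.injective (by simpa using congrArg Rat.den h)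

lemma silverConv_cross_succ (k : ℕ) :
    (silverConv k).num * ((silverConv (k + 1)).den : ℤ)
      - (silverConv (k + 1)).num * (silverConv k).den = (-1) ^ (k + 1) := by
  simp only [silverConv_num, silverConv_den]
  linear_combination (-1 : ℤ) * pell_cassini (k + 1)

lemma silverConv_cross_add_two (k : ℕ) :
    (silverConv k).num * ((silverConv (k + 2)).den : ℤ)
      - (silverConv (k + 2)).num * (silverConv k).den = 2 * (-1) ^ (k + 1) := by
  simp only [silverConv_num, silverConv_den]
  have h3 : (pell (k + 3) : ℤ) = 2 * pell (k + 2) + pell (k + 1) := mod_cast pell_add_two _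
  have h4 : (pell (k + 4) : ℤ) = 2 * pell (k + 3) + pell (k + 2) := mod_cast pell_add_two _
  linear_combination
    (-(pell (k + 1) : ℤ)) * h4 + (pell (k + 2) : ℤ) * h3 - 2 * pell_cassini (k + 1)

lemma farey_adj_silverConv_succ (k : ℕ) :
    Farey.Adj (some (silverConv k)) (some (silverConv (k + 1))) := by
  rw [Farey.adj_some_iff, silverConv_cross_succ]
  simp

lemma not_farey_adj_silverConv_add_two (k : ℕ) :
    ¬ Farey.Adj (some (silverConv k)) (some (silverConv (k + 2))) := by
  rw [Farey.adj_some_iff, silverConv_cross_add_two]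
  simp

lemma silverConv_add_two_mem_uIoo (k : ℕ) :
    silverConv (k + 2) ∈ uIoo (silverConv k) (silverConv (k + 1)) := by
  have h01 := silverConv_cross_succ k
  have h02 := silverConv_cross_add_two k
  have h12 := silverConv_cross_succ (k + 1)
  rw [pow_succ _ (k + 1)] at h12
  rcases neg_one_pow_eq_or ℤ (k + 1) with hs | hs <;> rw [hs] at h01 h02 h12
  · rw [uIoo_of_gt ((Rat.lt_iff _ _).mpr (by linarith))]
    exact ⟨(Rat.lt_iff _ _).mpr (by linarith), (Rat.lt_iff _ _).mpr (by linarith)⟩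
  · rw [uIoo_of_lt ((Rat.lt_iff _ _).mpr (by linarith))]
    exact ⟨(Rat.lt_iff _ _).mpr (by linarith), (Rat.lt_iff _ _).mpr (by linarith)⟩

lemma silverConv_zero_lt_one : silverConv 0 < silverConv 1 := by
  norm_num [silverConv, pell]

/-- `silverInterval k` is the side of the Farey edge `silverConv (k - 1)`, `silverConv k` away
from `∞`; for `k = 0` that edge is `∞`, `silverConv 0`. -/
def silverInterval : ℕ → Set ℚ
  | 0 => Ioi (silverConv 0)
  | k + 1 => uIoo (silverConv k) (silverConv (k + 1))

lemma silverConv_succ_mem_silverInterval (k : ℕ) : silverConv (k + 1) ∈ silverInterval k := by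
  cases k with
  | zero => exact silverConv_zero_lt_one
  | succ k => exact silverConv_add_two_mem_uIoo k

lemma silverInterval_antitone : Antitone silverInterval := by
  refine antitone_nat_of_succ_le fun k => ?_
  cases k with
  | zero =>
    show uIoo (silverConv 0) (silverConv 1) ⊆ Ioi (silverConv 0)
    rw [uIoo_of_lt silverConv_zero_lt_one]
    exact Ioo_subset_Ioi_self
  | succ k =>
    exact uIoo_subset_Ioo right_mem_uIcc
      (uIoo_subset_uIcc_self (silverConv_add_two_mem_uIoo k))

lemma pell_add_pell_le_den_of_mem_silverInterval {w : ℚ} {k : ℕ}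
    (hw : w ∈ silverInterval (k + 1)) : pell (k + 1) + pell (k + 2) ≤ w.den := by
  simpa using Farey.den_add_den_le_of_mem_uIoo (farey_adj_silverConv_succ k) hw

lemma exists_notMem_silverInterval (w : ℚ) : ∃ k, w ∉ silverInterval k := by
  refine ⟨w.den + 1, fun hw => ?_⟩
  have := pell_add_pell_le_den_of_mem_silverInterval hw
  have : w.den ≤ pell (w.den + 1) := pell_succ_strictMono.id_le w.den
  have : 0 < pell (w.den + 2) := pell_succ_pos _
  omega

noncomputable def silverDepth (w : ℚ) : ℕ := sInf {k | w ∉ silverInterval k}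

lemma mem_silverInterval_iff {w : ℚ} {k : ℕ} : w ∈ silverInterval k ↔ k < silverDepth w :=
  silverInterval_antitone.mem_iff_lt_sInf (exists_notMem_silverInterval w) k

lemma silverConv_mem_silverInterval_iff {j k : ℕ} : silverConv j ∈ silverInterval k ↔ k < j := by
  refine ⟨fun h => lt_of_not_ge fun hjk => ?_, fun h => ?_⟩
  · have := silverInterval_antitone hjk h
    cases j with
    | zero => exact lt_irrefl (silverConv 0) this
    | succ j => exact right_notMem_uIoo (a := silverConv j) this
  · obtain ⟨j, rfl⟩ := Nat.exists_eq_add_of_lt h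
    exact silverInterval_antitone (Nat.le_add_right k j)
      (silverConv_succ_mem_silverInterval (k + j))

lemma silverDepth_silverConv (j : ℕ) : silverDepth (silverConv j) = j :=
  eq_of_forall_lt_iff fun _ => by rw [← mem_silverInterval_iff, silverConv_mem_silverInterval_iff]

-- For `k = 0`, `silverConv (k - 1)` is `silverConv 0` by truncated subtraction.
lemma mem_silverInterval_or_of_adj {u v : ℚ} {k : ℕ} (huv : Farey.Adj (some u) (some v))
    (hv : v ∈ silverInterval k) :
    u ∈ silverInterval k ∨ u = silverConv (k - 1) ∨ u = silverConv k := by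
  cases k with
  | zero =>
    by_contra! hu
    have hlt : u < silverConv 0 := lt_of_le_of_ne (not_lt.mp hu.1) hu.2.1
    exact Farey.not_adj_of_lt_of_lt (by simp [silverConv_zero]) hlt hv huv
  | succ k => exact Farey.mem_uIoo_or_eq_of_adj_of_mem_uIoo (farey_adj_silverConv_succ k) huv hv

lemma silverDepth_le_of_adj {u v : ℚ} (hu : u ∉ range silverConv)
    (huv : Farey.Adj (some u) (some v)) : silverDepth v ≤ silverDepth u := by
  refine le_of_forall_lt fun k hk => ?_
  rw [← mem_silverInterval_iff] at hk ⊢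
  rcases mem_silverInterval_or_of_adj huv hk with h | h | h
  · exact h
  · exact absurd ⟨_, h.symm⟩ hu
  · exact absurd ⟨_, h.symm⟩ hu

lemma silverDepth_le_of_adj_silverConv {v : ℚ} {i : ℕ}
    (h : Farey.Adj (some (silverConv i)) (some v)) : silverDepth v ≤ i + 2 := by
  refine le_of_forall_lt fun k hk => ?_
  rw [← mem_silverInterval_iff] at hk
  rcases mem_silverInterval_or_of_adj h hk with h | h | h
  · rw [silverConv_mem_silverInterval_iff] at h
    omega
  · have := silverConv_injective h
    omega
  · have := silverConv_injective h
    omega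

/-- Convergents are placed one step beyond their depth, at their position along the geodesic
`∞, silverConv 0, silverConv 1, …`. -/
noncomputable def silverLevel (w : ℚ) : ℕ := silverDepth w + (range silverConv).indicator 1 w

lemma silverLevel_silverConv (j : ℕ) : silverLevel (silverConv j) = j + 1 := by
  simp [silverLevel, silverDepth_silverConv]

lemma silverLevel_of_notMem {w : ℚ} (hw : w ∉ range silverConv) :
    silverLevel w = silverDepth w := by
  simp [silverLevel, indicator_of_notMem hw]

lemma silverLevel_le_of_adj {u v : ℚ} (huv : Farey.Adj (some u) (some v)) :
    silverLevel v ≤ silverLevel u + 1 := by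
  by_cases hu : u ∈ range silverConv
  · obtain ⟨i, rfl⟩ := hu
    have hv := silverDepth_le_of_adj_silverConv huv
    rw [silverLevel_silverConv]
    by_cases hv' : v ∈ range silverConv
    · obtain ⟨j, rfl⟩ := hv'
      rw [silverDepth_silverConv] at hv
      have : j ≠ i + 2 := by rintro rfl; exact not_farey_adj_silverConv_add_two i huv
      rw [silverLevel_silverConv]
      omega
    · rw [silverLevel_of_notMem hv']
      exact hv
  · have hv := silverDepth_le_of_adj hu huv
    rw [silverLevel_of_notMem hu]
    by_cases hv' : v ∈ range silverConv
    · obtain ⟨j, rfl⟩ := hv'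
      rw [silverDepth_silverConv] at hv
      rw [silverLevel_silverConv]
      omega
    · rw [silverLevel_of_notMem hv']
      omega

lemma silverConv_zero_le (j : ℕ) : silverConv 0 ≤ silverConv j := by
  rcases Nat.eq_zero_or_pos j with rfl | hj
  · rfl
  · exact le_of_lt (silverConv_mem_silverInterval_iff.mpr hj)

lemma two_le_of_silverLevel_ne_zero {w : ℚ} (hw : silverLevel w ≠ 0) : 2 ≤ w := by
  rw [← silverConv_zero]
  by_cases hc : w ∈ range silverConv
  · obtain ⟨j, rfl⟩ := hc
    exact silverConv_zero_le j
  · rw [silverLevel_of_notMem hc, ← Nat.pos_iff_ne_zero, ← mem_silverInterval_iff] at hw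
    exact le_of_lt hw

lemma silverLevel_le_one_of_den_eq_one {w : ℚ} (hw : w.den = 1) : silverLevel w ≤ 1 := by
  by_cases hc : w ∈ range silverConv
  · obtain ⟨j, rfl⟩ := hc
    rw [silverConv_den] at hw
    have : j = 0 := pell_succ_strictMono.injective (hw.trans rfl)
    rw [this, silverLevel_silverConv]
  · rw [silverLevel_of_notMem hc]
    refine le_of_not_gt fun h => ?_
    have := pell_add_pell_le_den_of_mem_silverInterval (mem_silverInterval_iff.mpr h)
    simp [pell, hw] at this

/-- A Farey edge cannot join a rational `≥ 2` to one `≤ -2`. -/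
lemma silverLevel_neg_eq_zero_of_adj {u v : ℚ} (huv : Farey.Adj (some u) (some v))
    (hu : silverLevel u ≠ 0) : silverLevel (-u) = 0 ∧ silverLevel (-v) = 0 := by
  have hu2 := two_le_of_silverLevel_ne_zero hu
  refine ⟨by_contra fun h => ?_, by_contra fun h => ?_⟩
  · linarith [two_le_of_silverLevel_ne_zero h]
  · have hv2 := two_le_of_silverLevel_ne_zero h
    exact Farey.not_adj_of_lt_of_lt Rat.den_zero (by linarith : v < 0) (by linarith) huv.symm

/-- The geodesic continues through `∞` into the negatives of the convergents. -/
noncomputable def silverPotential : Option ℚ → ℤ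
  | none => 0
  | some w => silverLevel w - silverLevel (-w)

lemma abs_silverPotential_le_one_of_den_eq_one {w : ℚ} (hw : w.den = 1) :
    |silverPotential (some w)| ≤ 1 := by
  have h₁ := silverLevel_le_one_of_den_eq_one hw
  have h₂ := silverLevel_le_one_of_den_eq_one ((Rat.den_neg_eq_den w).trans hw)
  have h₃ : silverLevel w = 0 ∨ silverLevel (-w) = 0 := by
    by_contra! h
    linarith [two_le_of_silverLevel_ne_zero h.1, two_le_of_silverLevel_ne_zero h.2]
  rw [silverPotential, abs_le]
  omega

lemma abs_silverPotential_sub_le_one {x y : Option ℚ} (h : Farey.Adj x y) :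
    |silverPotential x - silverPotential y| ≤ 1 := by
  match x, y, h with
  | none, some v, h =>
    simpa only [silverPotential, zero_sub, abs_neg] using
      abs_silverPotential_le_one_of_den_eq_one h
  | some u, none, h =>
    simpa only [silverPotential, sub_zero] using abs_silverPotential_le_one_of_den_eq_one h
  | some u, some v, h =>
    have h₁ := silverLevel_le_of_adj h
    have h₂ := silverLevel_le_of_adj h.symm
    have h₃ := silverLevel_le_of_adj (Farey.adj_neg h)
    have h₄ := silverLevel_le_of_adj (Farey.adj_neg h).symm
    have h₅ : silverLevel u = 0 ∧ silverLevel v = 0 ∨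
        silverLevel (-u) = 0 ∧ silverLevel (-v) = 0 := by
      by_cases hu : silverLevel u = 0
      · by_cases hv : silverLevel v = 0
        · exact Or.inl ⟨hu, hv⟩
        · exact Or.inr (silverLevel_neg_eq_zero_of_adj h.symm hv).symm
      · exact Or.inr (silverLevel_neg_eq_zero_of_adj h hu)
    rw [silverPotential, silverPotential, abs_le]
    omega

def silverGeodesic : ℤ → Option ℚ
  | .ofNat 0 => none
  | .ofNat (k + 1) => some (silverConv k)
  | .negSucc k => some (-silverConv k)

lemma silverPotential_silverGeodesic (m : ℤ) : silverPotential (silverGeodesic m) = m := by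
  have hneg (k : ℕ) : silverLevel (-silverConv k) = 0 := by
    by_contra h
    linarith [two_le_of_silverLevel_ne_zero h, silverConv_zero_le k, silverConv_zero]
  match m with
  | .ofNat 0 => rfl
  | .ofNat (k + 1) => simp [silverGeodesic, silverPotential, silverLevel_silverConv, hneg]
  | .negSucc k =>
    simp [silverGeodesic, silverPotential, silverLevel_silverConv, hneg, Int.negSucc_eq]

lemma farey_adj_silverGeodesic (m : ℤ) :
    Farey.Adj (silverGeodesic m) (silverGeodesic (m + 1)) := by
  match m with
  | .ofNat 0 => exact (Farey.adj_none_some_iff.mpr (by simp [silverConv_zero]))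
  | .ofNat (k + 1) => exact farey_adj_silverConv_succ k
  | .negSucc 0 => exact (Farey.adj_none_some_iff.mpr (by simp [silverConv_zero])).symm
  | .negSucc (k + 1) => exact (Farey.adj_neg (farey_adj_silverConv_succ k)).symm

theorem edist_silverGeodesic (a b : ℤ) :
    Farey.edist (silverGeodesic a) (silverGeodesic b) = (a - b).natAbs :=
  SimpleGraph.edist_eq_natAbs_of_leftInverse farey_adj_silverGeodesic
    (fun _ _ => abs_silverPotential_sub_le_one) silverPotential_silverGeodesic a b

lemma fareyPow_eq_boxPi (n : ℕ) : FareyPow n = Farey.boxPi (Fin n) := rfl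

theorem fareyPow_isometric_embedding_int_l1_general (n : ℕ) :
    ∃ f : (Fin n → ℤ) → (Fin n → Option ℚ),
      ∀ x y : Fin n → ℤ,
        ((FareyPow n).dist (f x) (f y) : ℤ) = ∑ i : Fin n, |x i - y i| := by
  refine ⟨fun x i => silverGeodesic (x i), fun x y => ?_⟩
  rw [SimpleGraph.dist, fareyPow_eq_boxPi, SimpleGraph.edist_boxPi]
  simp only [edist_silverGeodesic, ← Nat.cast_sum, ENat.toNat_natCast]
  push_cast [Int.natCast_natAbs]
  rfl

/-- For every `n ≥ 1`, there is an isometric embedding of `ℤⁿ` with the ℓ¹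
metric into the n-fold box product of the Farey graph. -/
theorem fareyPow_isometric_embedding_int_l1 (n : ℕ) (hn : 1 ≤ n) :
    ∃ f : (Fin n → ℤ) → (Fin n → Option ℚ),
      ∀ x y : Fin n → ℤ,
        ((FareyPow n).dist (f x) (f y) : ℤ) = ∑ i : Fin n, |x i - y i| :=
  fareyPow_isometric_embedding_int_l1_general n
end
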